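/- The real vector space of all functions u : 𝔻 → ℝ that are harmonic on 𝔻 and have nontangential limit 0 at almost every point of ∂𝔻 (with respect to arc-length measure on the circle) is infinite-dimensional. -/

import Mathlib

/-! The functions `Re (((1 + z) / (1 - z)) ^ (2n + 1))` do the job. They are real parts of
functions holomorphic off `z = 1`, hence harmonic on the disk. The Cayley transform
`(1 + z) / (1 - z)` maps the unit circle minus `1` onto the imaginary axis, and odd powers of
imaginary numbers are imaginary, so each function is continuous with value `0` at every boundary
point but `1`. On the real segment `(-1, 1)` the `n`-th function is `t ^ (2n + 1)` with
`t = (1 + x) / (1 - x)` taking infinitely many values, so a vanishing linear combination gives a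
polynomial with infinitely many roots. -/

open Complex MeasureTheory Filter Set

noncomputable section

def unitDisk : Set ℂ := {z : ℂ | ‖z‖ < 1}

def HarmonicOnDisk (u : ℂ → ℝ) : Prop :=
  ContDiffOn ℝ 2 u unitDisk ∧
  ∀ z ∈ unitDisk,
    iteratedFDeriv ℝ 2 u z ![1, 1] + iteratedFDeriv ℝ 2 u z ![Complex.I, Complex.I] = 0

def HasNTLimit (u : ℂ → ℝ) (ζ : ℂ) (L : ℝ) : Prop :=
  ∀ c : ℝ, 0 < c →
    Filter.Tendsto u
      (nhdsWithin ζ {z : ℂ | ‖z‖ < 1 ∧ ‖z - ζ‖ ≤ c * (1 - ‖z‖)})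
      (nhds L)

open InnerProductSpace Polynomial

theorem harmonicOnDisk_of_harmonicOnNhd {u : ℂ → ℝ} (hu : HarmonicOnNhd u unitDisk) :
    HarmonicOnDisk u :=
  ⟨hu.contDiffOn, fun z hz => by
    simpa [laplacian_eq_iteratedFDeriv_complexPlane] using (hu z hz).2.eq_of_nhds⟩

theorem ContinuousAt.hasNTLimit {u : ℂ → ℝ} {ζ : ℂ} (hu : ContinuousAt u ζ) :
    HasNTLimit u ζ (u ζ) :=
  fun _ _ => hu.tendsto.mono_left nhdsWithin_le_nhds

theorem ae_exp_mul_I_ne_one : ∀ᵐ Θ : ℝ, exp (Θ * I) ≠ 1 := by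
  refine measure_eq_zero_iff_ae_notMem.1 <|
    ((countable_range fun n : ℤ => n * (2 * Real.pi)).mono ?_).measure_zero _
  intro Θ (h : exp (Θ * I) = 1)
  exact (Circle.exp_eq_one.1 (Circle.ext (by simpa using h))).imp fun _ hn => hn.symm

theorem Complex.re_pow_eq_zero_of_re_eq_zero {w : ℂ} (hw : w.re = 0) {n : ℕ} (hn : Odd n) :
    (w ^ n).re = 0 := by
  have hconj : (starRingEnd ℂ) (w ^ n) = -w ^ n := by
    rw [map_pow, show (starRingEnd ℂ) w = -w from Complex.ext (by simp [hw]) (by simp),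
      hn.neg_pow]
  have := congrArg re hconj
  rw [conj_re, neg_re] at this
  linarith

theorem linearIndependent_pow_comp {α R : Type*} [CommRing R] [IsDomain R] {g : α → R}
    (hg : (range g).Infinite) {k : ℕ → ℕ} (hk : Function.Injective k) :
    LinearIndependent R fun n (a : α) => g a ^ k n := by
  let evalAt : R[X] →ₗ[R] α → R := LinearMap.pi fun a => leval (g a)
  have hker : LinearMap.ker evalAt = ⊥ := by
    refine LinearMap.ker_eq_bot'.2 fun p hp => p.eq_zero_of_infinite_isRoot (hg.mono ?_)
    rintro _ ⟨a, rfl⟩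
    exact congrFun hp a
  have hfamily : evalAt ∘ (basisMonomials R ∘ k) = fun n a => g a ^ k n := by
    funext n a
    simp [evalAt]
  exact hfamily ▸ ((basisMonomials R).linearIndependent.comp k hk).map' evalAt hker

def cayley (z : ℂ) : ℂ := (1 + z) / (1 - z)

theorem analyticAt_cayley {z : ℂ} (hz : z ≠ 1) : AnalyticAt ℂ cayley z := by
  unfold cayley
  fun_prop (disch := exact sub_ne_zero.2 hz.symm)

theorem re_cayley_eq_zero_of_norm_eq_one {ζ : ℂ} (hζ : ‖ζ‖ = 1) : (cayley ζ).re = 0 := by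
  have h : ζ.re * ζ.re + ζ.im * ζ.im = 1 := by
    rw [← normSq_apply, normSq_eq_norm_sq, hζ, one_pow]
  rw [cayley, div_re, ← add_div, div_eq_zero_iff]
  left
  simp only [add_re, one_re, sub_re, add_im, one_im, sub_im]
  linear_combination -h

theorem cayley_ofReal (x : ℝ) : cayley x = ((1 + x) / (1 - x) : ℝ) := by
  push_cast [cayley]
  rfl

theorem infinite_range_one_add_div_one_sub_Ioo :
    (range fun x : Ioo (-1 : ℝ) 1 => (1 + (x : ℝ)) / (1 - x)).Infinite := by
  have : Infinite (Ioo (-1 : ℝ) 1) := (Ioo_infinite (by norm_num)).to_subtype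
  refine infinite_range_of_injective fun x y h => Subtype.ext ?_
  have hx := x.2.2
  have hy := y.2.2
  rw [div_eq_div_iff (by linarith) (by linarith)] at h
  linarith

theorem ofReal_mem_unitDisk {x : ℝ} (hx : x ∈ Ioo (-1) 1) : (x : ℂ) ∈ unitDisk := by
  simpa [unitDisk, abs_lt] using hx

/-- The space of harmonic functions on the unit disk having nontangential limit `0` at
almost every boundary point `e^{iΘ}`, `Θ ∈ [0, 2π)` (w.r.t. arc length, i.e. Lebesgue
measure in `Θ`), is infinite dimensional. -/
theorem infinite_dim_of_harmonic_with_ae_zero_nontangential_limits :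
    ∃ f : ℕ → (ℂ → ℝ),
      (∀ n : ℕ, HarmonicOnDisk (f n) ∧
        ∀ᵐ (Θ : ℝ) ∂(volume.restrict (Set.Ico (0 : ℝ) (2 * Real.pi))),
          HasNTLimit (f n) (Complex.exp (Θ * Complex.I)) 0) ∧
      LinearIndependent ℝ (fun n : ℕ => unitDisk.restrict (f n)) := by
  refine ⟨fun n z => (cayley z ^ (2 * n + 1)).re, fun n => ⟨?_, ?_⟩, ?_⟩
  · refine harmonicOnDisk_of_harmonicOnNhd fun z hz => ?_
    have hz1 : z ≠ 1 := by rintro rfl; simp [unitDisk] at hz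
    exact ((analyticAt_cayley hz1).pow _).harmonicAt_re
  · filter_upwards [ae_restrict_of_ae ae_exp_mul_I_ne_one] with Θ hΘ
    have hζ := re_cayley_eq_zero_of_norm_eq_one (norm_exp_ofReal_mul_I Θ)
    have hcayley := (analyticAt_cayley hΘ).continuousAt
    have hcont : ContinuousAt (fun z => (cayley z ^ (2 * n + 1)).re) (exp (Θ * I)) := by
      fun_prop
    have := hcont.hasNTLimit
    rwa [re_pow_eq_zero_of_re_eq_zero hζ (odd_two_mul_add_one n)] at this
  · refine LinearIndependent.of_comp
      (LinearMap.funLeft ℝ ℝ fun x : Ioo (-1 : ℝ) 1 => ⟨x, ofReal_mem_unitDisk x.2⟩) ?_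
    show LinearIndependent ℝ fun n (x : Ioo (-1 : ℝ) 1) => (cayley x ^ (2 * n + 1)).re
    simp only [cayley_ofReal, ← ofReal_pow, ofReal_re]
    exact linearIndependent_pow_comp infinite_range_one_add_div_one_sub_Ioo
      (fun m n h => by simpa using h : Function.Injective fun n => 2 * n + 1)

end
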